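/- arXiv:math/0512068 — 3 statements merged into one kernel-verified Lean document; each statement's English description precedes it below -/
import Mathlib

section
/- Fix real β₁ ≠ 0 and γ with γβ₁² + 1 − γ ≠ 0, and data (x₁,y₁),…,(xₙ,yₙ) with n ≥ 1. Then the partial derivative of SSE(β₀,β₁) with respect to β₀ vanishes if and only if β₀ = ȳ − β₁x̄, where x̄ = (Σᵢxᵢ)/n and ȳ = (Σᵢyᵢ)/n. In particular this critical value of β₀ does not depend on γ. -/
/-- The weighted sum of squared vertical and squared horizontal errors. -/
noncomputable def SSE (n : ℕ) (x y : Fin n → ℝ) (γ β₀ β₁ : ℝ) : ℝ :=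
  γ * ∑ i, (y i - β₀ - β₁ * x i) ^ 2
    + (1 - γ) * ∑ i, (x i - y i / β₁ + β₀ / β₁) ^ 2

/-- The partial derivative of SSE with respect to β₀ vanishes iff β₀ = ȳ − β₁·x̄;
in particular the critical intercept does not depend on γ. -/
theorem deriv_SSE_beta0_eq_zero_iff (n : ℕ) (hn : 1 ≤ n) (x y : Fin n → ℝ)
    (γ β₁ : ℝ) (hβ₁ : β₁ ≠ 0) (hγ : γ * β₁ ^ 2 + 1 - γ ≠ 0) (β₀ : ℝ) :
    deriv (fun b₀ => SSE n x y γ b₀ β₁) β₀ = 0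
      ↔ β₀ = (∑ i, y i) / n - β₁ * ((∑ i, x i) / n) := by
  have hn0 : (n : ℝ) ≠ 0 := Nat.cast_ne_zero.mpr (by omega)
  have hD : HasDerivAt (fun b => SSE n x y γ b β₁)
      (γ * ∑ i, (2 * (y i - β₀ - β₁ * x i) ^ 1 * (-1))
        + (1 - γ) * ∑ i, (2 * (x i - y i / β₁ + β₀ / β₁) ^ 1 * (1 / β₁))) β₀ := by
    unfold SSE
    apply HasDerivAt.add
    · exact HasDerivAt.const_mul γ (HasDerivAt.fun_sum fun i _ =>
        (((hasDerivAt_id β₀).const_sub (y i)).sub_const (β₁ * x i)).pow 2)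
    · refine HasDerivAt.const_mul (1 - γ) (HasDerivAt.fun_sum fun i _ => ?_)
      have h : HasDerivAt (fun b => x i - y i / β₁ + b / β₁) (1 / β₁) β₀ := by
        simpa using ((hasDerivAt_id β₀).div_const β₁).const_add (x i - y i / β₁)
      simpa using h.fun_pow 2
  rw [hD.deriv]
  set S := ∑ i, (y i - β₀ - β₁ * x i) with hS
  have h1 : ∑ i, (2 * (y i - β₀ - β₁ * x i) ^ 1 * (-1)) = -2 * S := by
    rw [hS, Finset.mul_sum]
    exact Finset.sum_congr rfl fun i _ => by ring
  have h2 : ∑ i, (2 * (x i - y i / β₁ + β₀ / β₁) ^ 1 * (1 / β₁)) = (-2 / β₁ ^ 2) * S := by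
    rw [hS, Finset.mul_sum]
    refine Finset.sum_congr rfl fun i _ => ?_
    field_simp
    ring
  rw [h1, h2]
  have hfac : γ * (-2 * S) + (1 - γ) * (-2 / β₁ ^ 2 * S)
      = (-2 * (γ * β₁ ^ 2 + 1 - γ) / β₁ ^ 2) * S := by
    field_simp
    ring
  rw [hfac]
  have hcoef : (-2 * (γ * β₁ ^ 2 + 1 - γ) / β₁ ^ 2) ≠ 0 := by
    apply div_ne_zero
    · intro h; apply hγ; linarith
    · positivity
  have hSval : S = (∑ i, y i) - n * β₀ - β₁ * ∑ i, x i := by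
    rw [hS]
    simp [Finset.sum_sub_distrib, Finset.mul_sum]
  constructor
  · intro h
    have hS0 : S = 0 := by
      rcases mul_eq_zero.mp h with h' | h'
      · exact absurd h' hcoef
      · exact h'
    rw [hSval] at hS0
    field_simp
    linarith
  · intro h
    have : S = 0 := by rw [hSval, h]; field_simp; ring
    rw [this, mul_zero]
end

section
/- Suppose 0 < γ < 1, S_xx > 0, and S_yy > 0. Then there exists a real t > 0 such that γ·S_xx·t⁴ − γ·S_xy·t³ + (1−γ)·S_xy·t − (1−γ)·S_yy = 0; that is, the fourth degree polynomial giving the slope of the best-fit line has a positive root. -/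
/-- For 0 < γ < 1 the fourth degree slope polynomial has a positive root. -/
theorem slope_poly_has_positive_root (γ Sxx Syy Sxy : ℝ)
    (hγ0 : 0 < γ) (hγ1 : γ < 1) (hxx : 0 < Sxx) (hyy : 0 < Syy) :
    ∃ t : ℝ, 0 < t ∧
      γ * Sxx * t ^ 4 - γ * Sxy * t ^ 3 + (1 - γ) * Sxy * t - (1 - γ) * Syy = 0 := by
  set f : ℝ → ℝ := fun t => γ * Sxx * t ^ 4 - γ * Sxy * t ^ 3 + (1 - γ) * Sxy * t - (1 - γ) * Syy
    with hf
  have hcont : Continuous f := by fun_prop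
  set C : ℝ := |Sxy| + (1 - γ) * Syy with hC
  set T : ℝ := max 1 ((C + 1) / (γ * Sxx)) with hT
  have hT1 : (1 : ℝ) ≤ T := le_max_left _ _
  have hTpos : 0 < T := lt_of_lt_of_le one_pos hT1
  have hgs : 0 < γ * Sxx := mul_pos hγ0 hxx
  have hTC : C + 1 ≤ γ * Sxx * T := by
    have := le_max_right 1 ((C + 1) / (γ * Sxx))
    calc C + 1 = γ * Sxx * ((C + 1) / (γ * Sxx)) := by field_simp
    _ ≤ γ * Sxx * T := by nlinarith
  have h1γ : 0 < 1 - γ := by linarith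
  have hfT : 0 < f T := by
    have habs : -|Sxy| ≤ Sxy ∧ Sxy ≤ |Sxy| := ⟨neg_abs_le _, le_abs_self _⟩
    have h3 : (1:ℝ) ≤ T ^ 3 := one_le_pow₀ hT1
    have hTT3 : T ≤ T ^ 3 := by nlinarith [sq_nonneg T, mul_le_mul_of_nonneg_left hT1 (mul_pos hTpos hTpos).le]
    simp only [hf]
    nlinarith [mul_le_mul_of_nonneg_left hTC (by positivity : (0:ℝ) ≤ T ^ 3),
      mul_le_mul_of_nonneg_left habs.2 (by positivity : (0:ℝ) ≤ T ^ 3),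
      mul_le_mul_of_nonneg_left habs.1 (by positivity : (0:ℝ) ≤ T ^ 3),
      mul_le_mul_of_nonneg_left habs.2 (by positivity : (0:ℝ) ≤ γ * T ^ 3),
      mul_le_mul_of_nonneg_left habs.1 (by positivity : (0:ℝ) ≤ γ * T ^ 3),
      mul_le_mul_of_nonneg_left habs.2 (mul_nonneg h1γ.le hTpos.le),
      mul_le_mul_of_nonneg_left habs.1 (mul_nonneg h1γ.le hTpos.le),
      mul_le_mul_of_nonneg_left habs.2 (mul_nonneg h1γ.le (by positivity)),
      mul_le_mul_of_nonneg_left habs.1 (mul_nonneg h1γ.le (by positivity)),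
      mul_le_mul_of_nonneg_left hTT3 (mul_nonneg h1γ.le (abs_nonneg Sxy)),
      mul_le_mul_of_nonneg_left h3 (mul_nonneg h1γ.le hyy.le)]
  have hf0 : f 0 < 0 := by
    simp only [hf]
    nlinarith
  have hiv := intermediate_value_Icc (le_of_lt hTpos) hcont.continuousOn
  have h0mem : (0 : ℝ) ∈ Set.Icc (f 0) (f T) := ⟨le_of_lt hf0, le_of_lt hfT⟩
  obtain ⟨c, hc, hfc⟩ := hiv h0mem
  refine ⟨c, ?_, hfc⟩
  rcases lt_or_eq_of_le hc.1 with h | h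
  · exact h
  · exfalso; rw [← h] at hfc; exact absurd hfc (ne_of_lt hf0)
end

section
/- Suppose 0 ≤ γ ≤ 1, S_xx > 0, S_yy > 0, S_xy > 0, and S_xy² ≤ S_xx·S_yy. If t > 0 satisfies γ·S_xx·t⁴ − γ·S_xy·t³ + (1−γ)·S_xy·t − (1−γ)·S_yy = 0, then S_xy/S_xx ≤ t ≤ S_yy/S_xy; equivalently, writing ρ = S_xy/√(S_xx·S_yy), the slope t satisfies ρ·√(S_yy/S_xx) ≤ t ≤ (1/ρ)·√(S_yy/S_xx). -/
/-- Any positive root of the slope polynomial lies between the least-squares slope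
Sxy/Sxx = ρ·√(Syy/Sxx) and the inverse-regression slope Syy/Sxy = (1/ρ)·√(Syy/Sxx). -/
theorem slope_poly_root_bounds (γ Sxx Syy Sxy : ℝ)
    (hγ0 : 0 ≤ γ) (hγ1 : γ ≤ 1) (hxx : 0 < Sxx) (hyy : 0 < Syy) (hxy : 0 < Sxy)
    (hcs : Sxy ^ 2 ≤ Sxx * Syy) (t : ℝ) (ht : 0 < t)
    (hroot : γ * Sxx * t ^ 4 - γ * Sxy * t ^ 3 + (1 - γ) * Sxy * t
        - (1 - γ) * Syy = 0) :
    (Sxy / Sxx ≤ t ∧ t ≤ Syy / Sxy) ∧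
    ((Sxy / Real.sqrt (Sxx * Syy)) * Real.sqrt (Syy / Sxx) ≤ t ∧
      t ≤ (1 / (Sxy / Real.sqrt (Sxx * Syy))) * Real.sqrt (Syy / Sxx)) := by
  have h1 : γ * t ^ 3 * (Sxx * t - Sxy) + (1 - γ) * (Sxy * t - Syy) = 0 := by
    linear_combination hroot
  have ht3 : 0 < t ^ 3 := pow_pos ht 3
  have hlow : Sxy / Sxx ≤ t := by
    rw [div_le_iff₀ hxx]
    by_contra h
    push_neg at h
    -- h : t * Sxx < Sxy
    have h2 : Sxy * t < Syy := by nlinarith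
    rcases eq_or_lt_of_le hγ0 with hg | hg
    · subst hg; simp at h1; linarith
    · nlinarith [mul_pos hg ht3]
  have hhigh : t ≤ Syy / Sxy := by
    rw [le_div_iff₀ hxy]
    by_contra h
    push_neg at h
    -- h : Syy < t * Sxy
    have h2 : Sxy < Sxx * t := by nlinarith
    rcases eq_or_lt_of_le hγ1 with hg | hg
    · nlinarith [mul_pos ht3 (sub_pos.mpr h2)]
    · nlinarith [mul_pos ht3 (sub_pos.mpr h2), mul_nonneg hγ0 (mul_pos ht3 (sub_pos.mpr h2)).le]
  have hsxx : (0:ℝ) < Real.sqrt Sxx := Real.sqrt_pos.mpr hxx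
  have hsyy : (0:ℝ) < Real.sqrt Syy := Real.sqrt_pos.mpr hyy
  have hsq1 : Real.sqrt Sxx ^ 2 = Sxx := Real.sq_sqrt hxx.le
  have hsq2 : Real.sqrt Syy ^ 2 = Syy := Real.sq_sqrt hyy.le
  have hmul : Real.sqrt (Sxx * Syy) = Real.sqrt Sxx * Real.sqrt Syy :=
    Real.sqrt_mul hxx.le _
  have hdiv : Real.sqrt (Syy / Sxx) = Real.sqrt Syy / Real.sqrt Sxx :=
    Real.sqrt_div' Syy hxx.le ▸ by rw [Real.sqrt_div hyy.le]
  have e1 : Sxy / Real.sqrt (Sxx * Syy) * Real.sqrt (Syy / Sxx) = Sxy / Sxx := by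
    rw [hmul, hdiv]
    field_simp
    linear_combination (-1) * hsq1
  have e2 : 1 / (Sxy / Real.sqrt (Sxx * Syy)) * Real.sqrt (Syy / Sxx) = Syy / Sxy := by
    rw [hmul, hdiv]
    field_simp
    linear_combination hsq2
  exact ⟨⟨hlow, hhigh⟩, by rw [e1, e2]; exact ⟨hlow, hhigh⟩⟩
end
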